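/- Let d ≥ 1 and let τ_{01}, τ_{12} denote the transpositions of Fin 3 swapping 0,1 and 1,2 respectively. Then there exist complex numbers α, β and α', β' such that: (i) the diagonal matrix O_A indexed by a : Fin 3 → Fin d with diagonal entry α·[a0 = a1] + β satisfies Tr[O_A · W_π] = Tr[W_{τ_{01}} · W_π] for every permutation π of Fin 3; and (ii) the diagonal matrix O_B with diagonal entry α'·[a1 = a2] + β' satisfies Tr[O_B · W_π] = Tr[W_{τ_{12}} · W_π] for every permutation π of Fin 3. (This is the trace-matching content of the paper's Proposition 4: a product-type computational-basis post-processing reproduces the pair of distinct swap operators under bi-local twirling.) -/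

import Mathlib

open Matrix

noncomputable section

/-- Permutation operator `W_π` of local index `I`: `W_π[b,a] = 1` iff `b = a ∘ π`. -/
def permOp (I : Type*) [DecidableEq I] {t : ℕ} (π : Equiv.Perm (Fin t)) :
    Matrix (Fin t → I) (Fin t → I) ℂ :=
  Matrix.of fun b a => if b = a ∘ ⇑π then 1 else 0

/-!
Take `α = d + 1`, `β = -1` and write `Fix σ` for the set of `a` with `a ∘ σ = a`. Then
`Tr[O W_π] = (d + 1) · #(Fix π ∩ {a i = a j}) - #Fix π` and `Tr[W_τ W_π] = #Fix (π τ)` for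
`τ = swap i j`, so everything reduces to `#Fix π + #Fix (π τ) = (d + 1) · #(Fix π ∩ Fix τ)`.
Since `#Fix σ = d ^ (number of cycles of σ)` and multiplying by `τ` either splits the cycle of `π`
through `i` and `j` or merges the two cycles through them, this identity holds in any `S_t`; for
`t = 3` it is checked on the six permutations.
-/

open Finset Equiv

section
variable {I : Type*} [DecidableEq I] [Fintype I] {t : ℕ}

theorem permOp_mul_permOp (σ π : Perm (Fin t)) :
    permOp I σ * permOp I π = permOp I (π * σ) := by
  ext b a
  simp [permOp, mul_apply, Function.comp_assoc]
  -- the two sides differ only in their `Decidable` instances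
  rfl

theorem trace_diagonal_mul_permOp (f : (Fin t → I) → ℂ) (π : Perm (Fin t)) :
    (diagonal f * permOp I π).trace = ∑ a with a ∘ π = a, f a := by
  simp [trace, permOp, sum_filter, eq_comm]

theorem trace_permOp (π : Perm (Fin t)) :
    (permOp I π).trace = #{a : Fin t → I | a ∘ π = a} := by
  simpa using trace_diagonal_mul_permOp (I := I) 1 π

theorem trace_diagonal_indicator_mul_permOp (α β : ℂ) (i j : Fin t) (π : Perm (Fin t)) :
    (diagonal (fun a : Fin t → I => α * (if a i = a j then 1 else 0) + β) * permOp I π).trace =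
      α * #{a : Fin t → I | a ∘ π = a ∧ a i = a j} + β * #{a : Fin t → I | a ∘ π = a} := by
  rw [trace_diagonal_mul_permOp, sum_add_distrib, ← mul_sum, sum_boole, filter_filter]
  simp [mul_comm]

end

theorem sum_fun_fin_three {I M : Type*} [Fintype I] [AddCommMonoid M] (g : (Fin 3 → I) → M) :
    ∑ a, g a = ∑ x, ∑ y, ∑ z, g ![x, y, z] := by
  rw [← ((prodCongr (.refl I) (finTwoArrowEquiv I).symm).trans
    (Fin.consEquiv fun _ : Fin 3 => I)).sum_comp]
  simp only [Fintype.sum_prod_type]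
  -- `![x, y, z]` unfolds to `Fin.cons x ![y, z]`
  rfl

theorem comp_eq_self_iff_fin_three {I : Type*} (a : Fin 3 → I) (σ : Perm (Fin 3)) :
    a ∘ σ = a ↔ a (σ 0) = a 0 ∧ a (σ 1) = a 1 ∧ a (σ 2) = a 2 := by
  simp [funext_iff, Fin.forall_fin_succ]

theorem Equiv.Perm.fin_three_cases (π : Perm (Fin 3)) :
    π = 1 ∨ π = swap 0 1 ∨ π = swap 1 2 ∨ π = swap 0 2 ∨
      π = swap 0 1 * swap 1 2 ∨ π = swap 1 2 * swap 0 1 := by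
  revert π; decide

section
variable {I : Type*} [DecidableEq I] [Fintype I]

theorem card_fixed_add_card_fixed_mul_swap (π : Perm (Fin 3)) {i j : Fin 3} (hij : i ≠ j) :
    #{a : Fin 3 → I | a ∘ π = a} + #{a : Fin 3 → I | a ∘ ⇑(π * swap i j) = a} =
      (Fintype.card I + 1) * #{a : Fin 3 → I | a ∘ π = a ∧ a i = a j} := by
  simp only [card_filter, sum_fun_fin_three, comp_eq_self_iff_fin_three]
  rcases π.fin_three_cases with rfl | rfl | rfl | rfl | rfl | rfl <;>
    fin_cases i <;> fin_cases j <;>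
    simp [swap_apply_of_ne_of_ne, ite_and, eq_comm] at hij ⊢ <;> ring

theorem trace_indicator_mul_permOp_eq_trace_swap_mul (π : Perm (Fin 3)) {i j : Fin 3}
    (hij : i ≠ j) :
    (diagonal (fun a : Fin 3 → I =>
        ((Fintype.card I : ℂ) + 1) * (if a i = a j then 1 else 0) + -1) * permOp I π).trace =
      (permOp I (swap i j) * permOp I π).trace := by
  rw [trace_diagonal_indicator_mul_permOp, permOp_mul_permOp, trace_permOp]
  have h := congrArg (Nat.cast : ℕ → ℂ) (card_fixed_add_card_fixed_mul_swap (I := I) π hij)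
  simp only [Nat.cast_add, Nat.cast_mul, Nat.cast_one] at h
  linear_combination -h

end

theorem stmt_15_general (d : ℕ) :
    ∃ α β α' β' : ℂ,
      (∀ π : Equiv.Perm (Fin 3),
        ((Matrix.diagonal fun a : Fin 3 → Fin d =>
            α * (if a 0 = a 1 then 1 else 0) + β) * permOp (Fin d) π).trace =
          (permOp (Fin d) (Equiv.swap (0 : Fin 3) 1) * permOp (Fin d) π).trace) ∧
      (∀ π : Equiv.Perm (Fin 3),
        ((Matrix.diagonal fun a : Fin 3 → Fin d =>
            α' * (if a 1 = a 2 then 1 else 0) + β') * permOp (Fin d) π).trace =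
          (permOp (Fin d) (Equiv.swap (1 : Fin 3) 2) * permOp (Fin d) π).trace) := by
  refine ⟨d + 1, -1, d + 1, -1, fun π => ?_, fun π => ?_⟩ <;>
    simpa using trace_indicator_mul_permOp_eq_trace_swap_mul (I := Fin d) π (by decide)

theorem stmt_15 (d : ℕ) (hd : 1 ≤ d) :
    ∃ α β α' β' : ℂ,
      (∀ π : Equiv.Perm (Fin 3),
        ((Matrix.diagonal fun a : Fin 3 → Fin d =>
            α * (if a 0 = a 1 then 1 else 0) + β) * permOp (Fin d) π).trace =
          (permOp (Fin d) (Equiv.swap (0 : Fin 3) 1) * permOp (Fin d) π).trace) ∧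
      (∀ π : Equiv.Perm (Fin 3),
        ((Matrix.diagonal fun a : Fin 3 → Fin d =>
            α' * (if a 1 = a 2 then 1 else 0) + β') * permOp (Fin d) π).trace =
          (permOp (Fin d) (Equiv.swap (1 : Fin 3) 2) * permOp (Fin d) π).trace) :=
  stmt_15_general d
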